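/- Fix C2 > 0 and let m1 = m2 = 0, so that g(l) = l⁻⁴·(9 + 3·exp(2l²/C2)). There exists a unique l₀ > 0 satisfying (l₀²/C2 − 1)·exp(2·l₀²/C2) = 3, and every global minimizer of g over (0,∞) equals l₀. -/

import Mathlib

open Real

/-- The centered case of the error variance: `g(l) = l⁻⁴ (9 + 3 e^{2l²/C2})`. -/
noncomputable def errVarC2Centered (C2 l : ℝ) : ℝ :=
  (l ^ 4)⁻¹ * (9 + 3 * Real.exp (2 * l ^ 2 / C2))

/-!
In the variable `t = l²/C2` one finds `g'(l) = 12 l⁻⁵ (φ(t) - 3)` with `φ(t) = (t - 1) e^{2t}`.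
Since `φ ≤ 0` on `t ≤ 1` and `φ` is strictly increasing on `[1, ∞)` with `φ(t) → ∞`, the equation
`φ(t) = 3` has exactly one root, hence `g` exactly one critical point on `(0, ∞)`; a global minimizer
on the open set `(0, ∞)` is a critical point.
-/

namespace ErrVarC2Centered

noncomputable def phi (t : ℝ) : ℝ := (t - 1) * exp (2 * t)

theorem hasDerivAt_phi (t : ℝ) : HasDerivAt phi ((2 * t - 1) * exp (2 * t)) t := by
  have hexp : HasDerivAt (fun t : ℝ => exp (2 * t)) (exp (2 * t) * 2) t :=
    ((hasDerivAt_id t).const_mul 2).exp.congr_deriv (by simp)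
  exact (((hasDerivAt_id t).sub_const 1).mul hexp).congr_deriv (by simp only [id]; ring)

theorem continuous_phi : Continuous phi := by
  unfold phi
  fun_prop

theorem strictMonoOn_phi : StrictMonoOn phi (Set.Ici (1 / 2)) := by
  refine strictMonoOn_of_deriv_pos (convex_Ici _) continuous_phi.continuousOn fun t ht => ?_
  rw [interior_Ici, Set.mem_Ioi] at ht
  rw [(hasDerivAt_phi t).deriv]
  have : 0 < 2 * t - 1 := by linarith
  positivity

theorem phi_nonpos {t : ℝ} (ht : t ≤ 1) : phi t ≤ 0 :=
  mul_nonpos_of_nonpos_of_nonneg (by linarith) (exp_pos _).le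

theorem one_lt_of_phi_eq {c t : ℝ} (hc : 0 < c) (ht : phi t = c) : 1 < t :=
  lt_of_not_ge fun hle => (phi_nonpos hle).not_gt (ht ▸ hc)

theorem existsUnique_phi_eq {c : ℝ} (hc : 0 < c) : ∃! t, phi t = c := by
  -- `φ(c + 1) = c e^{2(c+1)} ≥ c`
  have hc_le : c ≤ phi (c + 1) := by
    have : 1 ≤ exp (2 * (c + 1)) := one_le_exp (by linarith)
    simp only [phi, add_sub_cancel_right]
    nlinarith
  obtain ⟨t, -, ht⟩ := intermediate_value_Icc (by linarith : (1 : ℝ) ≤ c + 1)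
    continuous_phi.continuousOn ⟨by simp [phi, hc.le], hc_le⟩
  refine ⟨t, ht, fun s hs => strictMonoOn_phi.injOn ?_ ?_ (hs.trans ht.symm)⟩
  · exact Set.mem_Ici.mpr (by linarith [one_lt_of_phi_eq hc hs])
  · exact Set.mem_Ici.mpr (by linarith [one_lt_of_phi_eq hc ht])

theorem phi_sq_div (C2 l : ℝ) :
    phi (l ^ 2 / C2) = (l ^ 2 / C2 - 1) * exp (2 * l ^ 2 / C2) := by
  rw [phi, mul_div_assoc]

theorem existsUnique_pos_phi_sq_div_eq {C2 c : ℝ} (hC2 : 0 < C2) (hc : 0 < c) :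
    ∃! l, 0 < l ∧ phi (l ^ 2 / C2) = c := by
  obtain ⟨t, ht, huniq⟩ := existsUnique_phi_eq hc
  have htpos : 0 < t := one_pos.trans (one_lt_of_phi_eq hc ht)
  have hsq : √(C2 * t) ^ 2 / C2 = t := by
    rw [sq_sqrt (by positivity)]
    field_simp
  refine ⟨√(C2 * t), ⟨by positivity, by rw [hsq, ht]⟩, fun l ⟨hl, hlc⟩ => ?_⟩
  have : l ^ 2 / C2 = √(C2 * t) ^ 2 / C2 := by rw [hsq, huniq _ hlc]
  rw [div_left_inj' hC2.ne'] at this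
  exact (pow_left_inj₀ hl.le (sqrt_nonneg _) two_ne_zero).mp this

theorem hasDerivAt_errVarC2Centered {C2 a : ℝ} (hC2 : C2 ≠ 0) (ha : a ≠ 0) :
    HasDerivAt (errVarC2Centered C2) (12 * (a ^ 5)⁻¹ * (phi (a ^ 2 / C2) - 3)) a := by
  have hinv : HasDerivAt (fun l : ℝ => (l ^ 4)⁻¹) (-(4 * a ^ 3) / (a ^ 4) ^ 2) a :=
    ((hasDerivAt_pow 4 a).inv (pow_ne_zero 4 ha)).congr_deriv (by norm_num)
  have hexp := ((((hasDerivAt_pow 2 a).const_mul 2).div_const C2).exp.const_mul 3).const_add 9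
  refine (hinv.mul hexp).congr_deriv ?_
  unfold phi
  field_simp
  ring

theorem phi_sq_div_eq_three_of_isLocalMin {C2 a : ℝ} (hC2 : C2 ≠ 0) (ha : a ≠ 0)
    (hmin : IsLocalMin (errVarC2Centered C2) a) : phi (a ^ 2 / C2) = 3 := by
  have h := hmin.hasDerivAt_eq_zero (hasDerivAt_errVarC2Centered hC2 ha)
  have : (12 : ℝ) * (a ^ 5)⁻¹ ≠ 0 := by positivity
  exact sub_eq_zero.mp ((mul_eq_zero.mp h).resolve_left this)

end ErrVarC2Centered

open ErrVarC2Centered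

/-- When `m = 0`, there is a unique `l₀ > 0` with `(l₀²/C2 − 1) e^{2l₀²/C2} = 3`,
and every global minimizer of `g` over `(0,∞)` equals `l₀`. -/
theorem errVarC2Centered_minimizer (C2 : ℝ) (hC2 : 0 < C2) :
    (∃! l0 : ℝ, 0 < l0 ∧ (l0 ^ 2 / C2 - 1) * Real.exp (2 * l0 ^ 2 / C2) = 3) ∧
    (∀ l0 lstar : ℝ,
      (0 < l0 ∧ (l0 ^ 2 / C2 - 1) * Real.exp (2 * l0 ^ 2 / C2) = 3) →
      0 < lstar →
      (∀ l : ℝ, 0 < l → errVarC2Centered C2 lstar ≤ errVarC2Centered C2 l) →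
      lstar = l0) := by
  simp only [← phi_sq_div]
  have hunique := existsUnique_pos_phi_sq_div_eq hC2 three_pos
  refine ⟨hunique, fun l0 lstar hl0 hlstar hmin => hunique.unique ⟨hlstar, ?_⟩ hl0⟩
  have hlocal : IsLocalMin (errVarC2Centered C2) lstar :=
    Filter.eventually_of_mem (Ioi_mem_nhds hlstar) hmin
  exact phi_sq_div_eq_three_of_isLocalMin hC2.ne' hlstar.ne' hlocal
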